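/- Let Γ be a simple connected 4-regular graph of order n, and let μ be the algebraic connectivity of Γ (the second smallest eigenvalue of the Laplacian matrix of Γ). Then the girth of Γ satisfies girth(Γ) ≥ ⌈n(μ−2)/μ⌉. -/

import Mathlib

open Finset SimpleGraph

/-- `μ` is the second smallest (counted with multiplicity) value of the family `e`. -/
def IsSecondSmallest {ι : Type*} (e : ι → ℝ) (μ : ℝ) : Prop :=
  ∃ i₀ i₁ : ι, i₀ ≠ i₁ ∧ e i₀ ≤ μ ∧ e i₁ = μ ∧ ∀ j : ι, j ≠ i₀ → μ ≤ e j

/-- `lam` is the largest value of the family `e`. -/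
def IsLargest {ι : Type*} (e : ι → ℝ) (lam : ℝ) : Prop :=
  (∃ i : ι, e i = lam) ∧ ∀ i : ι, e i ≤ lam

/-!
Let `C` be a cycle of length `g` with vertex set `S`. Testing the second Laplacian eigenvalue
against `n·1_S - g·1`, which is orthogonal to the constants, gives Fiedler's bound
`μ·g·(n - g) ≤ n·e(S, Sᶜ)`, where `e(S, Sᶜ) = 1_Sᵀ L 1_S` counts the edges leaving `S`. In a
4-regular graph every vertex of `C` keeps two of its four edges inside `S`, so `e(S, Sᶜ) ≤ 2g`,
hence `μ·(n - g) ≤ 2n`, i.e. `g ≥ n(μ - 2)/μ`.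
-/

open Matrix

namespace Matrix.IsHermitian

variable {n : Type*} [Fintype n] [DecidableEq n] {A : Matrix n n ℝ}

theorem dotProduct_eq_sum_eigenvectorBasis (hA : A.IsHermitian) (x y : n → ℝ) :
    x ⬝ᵥ y = ∑ j, (hA.eigenvectorBasis j ⬝ᵥ x) * (hA.eigenvectorBasis j ⬝ᵥ y) := by
  have := hA.eigenvectorBasis.sum_inner_mul_inner (WithLp.toLp 2 x) (WithLp.toLp 2 y)
  simp only [EuclideanSpace.inner_eq_star_dotProduct, star_trivial] at this
  simpa [dotProduct_comm] using this.symm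

theorem eigenvectorBasis_dotProduct_mulVec (hA : A.IsHermitian) (j : n) (x : n → ℝ) :
    hA.eigenvectorBasis j ⬝ᵥ (A *ᵥ x) = hA.eigenvalues j * (hA.eigenvectorBasis j ⬝ᵥ x) := by
  have hsymm : Aᵀ = A := by rw [← conjTranspose_eq_transpose_of_trivial]; exact hA
  rw [dotProduct_mulVec, ← mulVec_transpose, hsymm, hA.mulVec_eigenvectorBasis, smul_dotProduct,
    smul_eq_mul]

theorem mul_dotProduct_self_le_of_isSecondSmallest (hA : A.IsHermitian) {μ ν : ℝ}
    (hμ : IsSecondSmallest hA.eigenvalues μ) {u : n → ℝ} (hu : A *ᵥ u = ν • u) (hu0 : u ≠ 0)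
    (hν : ν < μ) {x : n → ℝ} (hx : x ⬝ᵥ u = 0) : μ * (x ⬝ᵥ x) ≤ x ⬝ᵥ (A *ᵥ x) := by
  obtain ⟨i₀, -, -, -, -, hge⟩ := hμ
  -- Only the `i₀`-th eigenvalue can lie below `μ`, so `u` is a multiple of the `i₀`-th
  -- eigenvector and `x ⊥ u` kills the `i₀`-th coordinate of `x`.
  have hbu : ∀ j ≠ i₀, hA.eigenvectorBasis j ⬝ᵥ u = 0 := fun j hj => by
    have h : hA.eigenvalues j * (hA.eigenvectorBasis j ⬝ᵥ u) =
        ν * (hA.eigenvectorBasis j ⬝ᵥ u) := by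
      rw [← eigenvectorBasis_dotProduct_mulVec, hu, dotProduct_smul, smul_eq_mul]
    exact (mul_eq_mul_right_iff.mp h).resolve_left (hν.trans_le (hge j hj)).ne'
  have hcoord (y : n → ℝ) :
      y ⬝ᵥ u = (hA.eigenvectorBasis i₀ ⬝ᵥ y) * (hA.eigenvectorBasis i₀ ⬝ᵥ u) := by
    rw [hA.dotProduct_eq_sum_eigenvectorBasis,
      sum_eq_single i₀ (fun j _ hj => by rw [hbu j hj, mul_zero]) (by simp)]
  have hxb : hA.eigenvectorBasis i₀ ⬝ᵥ x = 0 := by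
    have hbu₀ : hA.eigenvectorBasis i₀ ⬝ᵥ u ≠ 0 := fun h =>
      hu0 (dotProduct_self_eq_zero.mp (by rw [hcoord, h, mul_zero]))
    simpa [hbu₀] using (hcoord x).symm.trans hx
  calc μ * (x ⬝ᵥ x) = ∑ j, μ * (hA.eigenvectorBasis j ⬝ᵥ x) ^ 2 := by
        simp only [hA.dotProduct_eq_sum_eigenvectorBasis x x, mul_sum, sq]
    _ ≤ ∑ j, hA.eigenvalues j * (hA.eigenvectorBasis j ⬝ᵥ x) ^ 2 := by
        refine sum_le_sum fun j _ => ?_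
        rcases eq_or_ne j i₀ with rfl | hj
        · simp [hxb]
        · exact mul_le_mul_of_nonneg_right (hge j hj) (sq_nonneg _)
    _ = x ⬝ᵥ (A *ᵥ x) := by
        simp only [hA.dotProduct_eq_sum_eigenvectorBasis x, eigenvectorBasis_dotProduct_mulVec]
        exact sum_congr rfl fun j _ => by ring

end Matrix.IsHermitian

namespace SimpleGraph

theorem Walk.IsCycle.card_support_toFinset {V : Type*} [DecidableEq V] {G : SimpleGraph V}
    {u : V} {p : G.Walk u u} (hp : p.IsCycle) : #p.support.toFinset = p.length := by
  have : p.support.toFinset = p.support.tail.toFinset := by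
    ext v
    simp only [List.mem_toFinset]
    refine ⟨fun hv => ?_, List.mem_of_mem_tail⟩
    rcases p.mem_support_iff.mp hv with rfl | h
    exacts [p.end_mem_tail_support hp.not_nil, h]
  rw [this, List.toFinset_card_of_nodup hp.support_nodup, List.length_tail, Walk.length_support]
  simp

variable {V : Type*} [Fintype V] [DecidableEq V] {G : SimpleGraph V} [DecidableRel G.Adj]

theorem indicator_dotProduct_lapMatrix_mulVec_indicator (S : Finset V) :
    (S : Set V).indicator 1 ⬝ᵥ (G.lapMatrix ℝ *ᵥ (S : Set V).indicator 1) =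
      ∑ v ∈ S, ((G.degree v : ℝ) - #(G.neighborFinset v ∩ S)) := by
  simp only [dotProduct, Set.indicator_apply, mem_coe, Pi.one_apply, ite_mul, one_mul, zero_mul,
    sum_ite_mem, univ_inter, lapMatrix_mulVec_apply, mul_one, mul_ite, mul_zero]
  refine sum_congr rfl fun v hv => ?_
  rw [if_pos hv, sum_const, nsmul_one]

theorem mul_card_mul_sub_card_le_of_isSecondSmallest (hL : (G.lapMatrix ℝ).IsHermitian) {μ : ℝ}
    (hμ : IsSecondSmallest hL.eigenvalues μ) (S : Finset V) :
    μ * (#S * (Fintype.card V - #S)) ≤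
      Fintype.card V * ((S : Set V).indicator 1 ⬝ᵥ (G.lapMatrix ℝ *ᵥ (S : Set V).indicator 1)) := by
  have hSn : (#S : ℝ) ≤ Fintype.card V := by exact_mod_cast card_le_univ S
  set n : ℝ := (Fintype.card V : ℝ)
  set χ : V → ℝ := (S : Set V).indicator 1
  have hq : 0 ≤ χ ⬝ᵥ (G.lapMatrix ℝ *ᵥ χ) := by
    simpa using (posSemidef_lapMatrix ℝ G).dotProduct_mulVec_nonneg χ
  have hχ1 : χ ⬝ᵥ 1 = #S := by simp [χ, dotProduct_one, Set.indicator_apply]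
  have hχχ : χ ⬝ᵥ χ = #S := by simp [χ, dotProduct, Set.indicator_apply]
  have hL1 : G.lapMatrix ℝ *ᵥ 1 = 0 := G.lapMatrix_mulVec_const_eq_zero
  have h1L : (1 : V → ℝ) ⬝ᵥ (G.lapMatrix ℝ *ᵥ χ) = 0 := by
    rw [dotProduct_mulVec, ← mulVec_transpose, (isSymm_lapMatrix ℝ G).eq, hL1, zero_dotProduct]
  rcases le_or_gt μ 0 with hμ0 | hμ0
  · nlinarith [mul_nonneg (Nat.cast_nonneg (α := ℝ) #S) (sub_nonneg.2 hSn), hSn]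
  rcases S.eq_empty_or_nonempty with rfl | ⟨v, -⟩
  · simp only [card_empty, Nat.cast_zero, zero_mul, mul_zero]
    exact mul_nonneg (Nat.cast_nonneg _) hq
  set x : V → ℝ := n • χ - (#S : ℝ) • 1
  have hx1 : x ⬝ᵥ 1 = 0 := by
    simp only [x, sub_dotProduct, smul_dotProduct, hχ1, one_dotProduct_one, smul_eq_mul]
    ring
  have hxx : x ⬝ᵥ x = n * (#S * (n - #S)) := by
    simp only [x, sub_dotProduct, dotProduct_sub, smul_dotProduct, dotProduct_smul, hχ1, hχχ,
      dotProduct_comm 1 χ, one_dotProduct_one, smul_eq_mul]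
    ring
  have hxLx : x ⬝ᵥ (G.lapMatrix ℝ *ᵥ x) = n ^ 2 * (χ ⬝ᵥ (G.lapMatrix ℝ *ᵥ χ)) := by
    simp only [x, mulVec_sub, mulVec_smul, hL1, smul_zero, sub_zero, dotProduct_smul,
      sub_dotProduct, smul_dotProduct, h1L, smul_eq_mul]
    ring
  have hray := hL.mul_dotProduct_self_le_of_isSecondSmallest hμ (ν := 0) (by simpa using hL1)
    (Function.ne_iff.mpr ⟨v, one_ne_zero⟩) hμ0 hx1
  rw [hxx, hxLx] at hray
  have hn : 0 < n := Nat.cast_pos.mpr (Fintype.card_pos_iff.mpr ⟨v⟩)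
  exact le_of_mul_le_mul_left (by linarith) hn

theorem Walk.IsCycle.two_le_card_neighborFinset_inter {u v : V} {p : G.Walk u u} (hp : p.IsCycle)
    (hv : v ∈ p.support) : 2 ≤ #(G.neighborFinset v ∩ p.support.toFinset) := by
  rw [← hp.ncard_neighborSet_toSubgraph_eq_two hv, ← Set.ncard_coe_finset]
  refine Set.ncard_le_ncard (fun w hw => ?_) (Set.toFinite _)
  simp only [coe_inter, Set.mem_inter_iff, mem_coe, mem_neighborFinset, List.mem_toFinset]
  exact ⟨hw.adj_sub, p.mem_verts_toSubgraph.mp hw.snd_mem⟩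

theorem Walk.IsCycle.indicator_dotProduct_lapMatrix_mulVec_indicator_le {d : ℕ}
    (hG : G.IsRegularOfDegree d) {u : V} {p : G.Walk u u} (hp : p.IsCycle) :
    (p.support.toFinset : Set V).indicator 1 ⬝ᵥ
        (G.lapMatrix ℝ *ᵥ (p.support.toFinset : Set V).indicator 1) ≤ (d - 2) * p.length := by
  rw [indicator_dotProduct_lapMatrix_mulVec_indicator, ← hp.card_support_toFinset]
  calc ∑ v ∈ p.support.toFinset, ((G.degree v : ℝ) - #(G.neighborFinset v ∩ p.support.toFinset))
      ≤ ∑ v ∈ p.support.toFinset, ((d : ℝ) - 2) := by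
        refine sum_le_sum fun v hv => ?_
        have h2 := hp.two_le_card_neighborFinset_inter (List.mem_toFinset.mp hv)
        rw [hG v]
        gcongr
        exact_mod_cast h2
    _ = (d - 2) * #p.support.toFinset := by rw [sum_const, nsmul_eq_mul, mul_comm]

end SimpleGraph

theorem stmt_8_general {V : Type*} [Fintype V] [DecidableEq V]
    (G : SimpleGraph V) [DecidableRel G.Adj]
    (n : ℕ) (hn : Fintype.card V = n)
    (hreg : G.IsRegularOfDegree 4)
    (mu : ℝ) (hmu : ∃ hL : (G.lapMatrix ℝ).IsHermitian, IsSecondSmallest hL.eigenvalues mu)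
    :
    ((⌈(n : ℝ) * (mu - 2) / mu⌉.toNat : ℕ∞) ≤ G.egirth) := by
  obtain ⟨hL, hμ⟩ := hmu
  have hμ0 : 0 ≤ mu := by
    obtain ⟨-, i, -, -, hi, -⟩ := hμ
    exact hi ▸ (posSemidef_lapMatrix ℝ G).eigenvalues_nonneg i
  rcases hμ0.eq_or_lt with rfl | hμpos
  · simp -- `x / 0 = 0`, so the bound is `0` when `μ = 0`
  rw [le_egirth]
  intro u p hp
  have hcut := hp.indicator_dotProduct_lapMatrix_mulVec_indicator_le hreg
  have hfiedler := mul_card_mul_sub_card_le_of_isSecondSmallest hL hμ p.support.toFinset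
  rw [hp.card_support_toFinset, hn] at hfiedler
  rw [Nat.cast_ofNat] at hcut
  have hℓ : (0 : ℝ) < p.length := Nat.cast_pos.mpr (by have := hp.three_le_length; omega)
  have hbound : mu * (n - p.length) * p.length ≤ 2 * n * p.length := by
    linarith [mul_le_mul_of_nonneg_left hcut (Nat.cast_nonneg (α := ℝ) n)]
  have hlength : n * (mu - 2) / mu ≤ p.length := by
    rw [div_le_iff₀ hμpos]
    linarith [le_of_mul_le_mul_right hbound hℓ]
  exact_mod_cast Int.toNat_le.mpr (Int.ceil_le.mpr (by exact_mod_cast hlength))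

theorem stmt_8 {V : Type*} [Fintype V] [DecidableEq V]
    (G : SimpleGraph V) [DecidableRel G.Adj]
    (n : ℕ) (hn : Fintype.card V = n)
    (hconn : G.Connected)
    (hreg : G.IsRegularOfDegree 4)
    (mu : ℝ) (hmu : ∃ hL : (G.lapMatrix ℝ).IsHermitian, IsSecondSmallest hL.eigenvalues mu)
    :
    ((⌈(n : ℝ) * (mu - 2) / mu⌉.toNat : ℕ∞) ≤ G.egirth) :=
  stmt_8_general G n hn hreg mu hmu
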